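/- For every natural number n, the normal ordering (X + q^{n-1} s D_q)(X + q^{n-2} s D_q) ⋯ (X + s D_q) = Σ_{m=0}^{n} Σ_{j=0}^{min(m,n-m)} q^{C(j+1,2) + C(n-m,2)} · (1+q^{m+1})(1+q^{m+2})⋯(1+q^{n-j}) · [n]_q! · s^{n-m} / ((1+q)(1+q²)⋯(1+q^{n-m}) · [j]_q! · [m-j]_q! · [n-m-j]_q!) · X^{m-j} D_q^{n-m-j} holds as an identity of operators on the polynomial ring, where C(a,2) = a(a-1)/2. -/

import Mathlib

noncomputable section

/-- The field `ℚ(q,s)` of rational functions in two indeterminates. -/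
abbrev F : Type := FractionRing (MvPolynomial (Fin 2) ℚ)

/-- The indeterminate `q`. -/
def q : F := algebraMap (MvPolynomial (Fin 2) ℚ) F (MvPolynomial.X 0)

/-- The indeterminate `s`. -/
def s : F := algebraMap (MvPolynomial (Fin 2) ℚ) F (MvPolynomial.X 1)

/-- The q-integer `[n]_q = 1 + q + ⋯ + q^{n-1}`. -/
def qInt (n : ℕ) : F := ∑ i ∈ Finset.range n, q ^ i

/-- The q-factorial `[n]_q! = ∏_{k=1}^n [k]_q`. -/
def qFact (n : ℕ) : F := ∏ k ∈ Finset.range n, qInt (k + 1)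

/-- The q-binomial coefficient `[n choose k]_q = [n]_q!/([k]_q! [n-k]_q!)`. -/
def qBinom (n k : ℕ) : F := qFact n / (qFact k * qFact (n - k))

/-- The operator `X` of multiplication by `x` on `F[x]`. -/
def Xop : Module.End F (Polynomial F) := LinearMap.mulLeft F Polynomial.X

/-- Division by `x` (discarding the constant term), as a linear map. -/
def divXL : Polynomial F →ₗ[F] Polynomial F where
  toFun := Polynomial.divX
  map_add' p r := Polynomial.divX_add
  map_smul' a p := by
    ext n
    simp [Polynomial.coeff_divX, Polynomial.coeff_smul]

/-- The q-derivative `D_q f(x) = (f(qx) - f(x))/((q-1)x)`; it is the F-linear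
operator on `F[x]` determined by `D_q x^n = [n]_q x^{n-1}`. -/
def Dq : Module.End F (Polynomial F) :=
  (q - 1)⁻¹ •
    (divXL ∘ₗ
      ((Polynomial.aeval (Polynomial.C q * Polynomial.X)).toLinearMap - LinearMap.id))

/-- The polynomials `h_n(x,t) = Σ_j q^{j²} t^j [n]_q!/((1+q)⋯(1+q^j)·[j]_q!·[n-2j]_q!)
x^{n-2j}` (the parameter `t` will be specialized to `s` or `q²s`). -/
def h (t : F) (n : ℕ) : Polynomial F :=
  ∑ j ∈ Finset.range (n / 2 + 1),
    Polynomial.C (q ^ (j ^ 2) * t ^ j * qFact n /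
        ((∏ i ∈ Finset.range j, (1 + q ^ (i + 1))) * qFact j * qFact (n - 2 * j))) *
      Polynomial.X ^ (n - 2 * j)


/-- `F(n) = (X + q^{n-1} s D_q)(X + q^{n-2} s D_q) ⋯ (X + s D_q)`,
with the factor `(X + s D_q)` acting first. -/
def Fop : ℕ → Module.End F (Polynomial F)
  | 0 => 1
  | n + 1 => (Xop + (q ^ n * s) • Dq) * Fop n

/-!
Expanding `(X + q^n s D_q) F(n)` with `D_q X^a = q^a X^a D_q + [a]_q X^(a-1)` shows that the
coefficient of `X^a D_q^b` in `F(a + b + 2j)` is the sum of contributions from `X^(a-1) D_q^b`,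
`X^a D_q^(b-1)` and `X^(a+1) D_q^b` in `F(a + b + 2j - 1)`. The closed form obeys this recurrence
because of the identity
`[a+b+2j](1 + q^(a+b+j)) = [a](1 + q^(a+j)) + q^(2a+j) [b](1 + q^(b+j))`
`  + q^a [j](1 + q^(a+b+j))(1 + q^(b+j))`,
whose three terms vanish exactly when the corresponding contribution is absent
(`a = 0`, `b = 0`, `j = 0`).
-/

open Finset

lemma algebraMap_ne_zero_of_eval_ne_zero {p : MvPolynomial (Fin 2) ℚ} (x : Fin 2 → ℚ)
    (hp : MvPolynomial.eval x p ≠ 0) : algebraMap (MvPolynomial (Fin 2) ℚ) F p ≠ 0 := by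
  rw [Ne, IsFractionRing.to_map_eq_zero_iff]
  rintro rfl
  simp at hp

lemma q_sub_one_ne_zero : q - 1 ≠ 0 := by
  have hq : q - 1 = algebraMap (MvPolynomial (Fin 2) ℚ) F (MvPolynomial.X 0 - 1) := by simp [q]
  rw [hq]
  exact algebraMap_ne_zero_of_eval_ne_zero (fun _ => 2) (by norm_num)

lemma one_add_q_pow_ne_zero (i : ℕ) : 1 + q ^ i ≠ 0 := by
  have hq : 1 + q ^ i = algebraMap (MvPolynomial (Fin 2) ℚ) F (1 + MvPolynomial.X 0 ^ i) := by
    simp [q]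
  rw [hq]
  exact algebraMap_ne_zero_of_eval_ne_zero (fun _ => 1) (by norm_num)

lemma qInt_succ_ne_zero (k : ℕ) : qInt (k + 1) ≠ 0 := by
  have hq : qInt (k + 1) = algebraMap (MvPolynomial (Fin 2) ℚ) F
      (∑ i ∈ range (k + 1), MvPolynomial.X 0 ^ i) := by
    simp [qInt, q]
  rw [hq]
  exact algebraMap_ne_zero_of_eval_ne_zero (fun _ => 1) (by simp [Nat.cast_add_one_ne_zero])

lemma qFact_ne_zero (n : ℕ) : qFact n ≠ 0 :=
  prod_ne_zero_iff.2 fun k _ => qInt_succ_ne_zero k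

lemma qInt_zero : qInt 0 = 0 := sum_range_zero _

lemma qInt_add (a k : ℕ) : qInt (a + k) = qInt a + q ^ a * qInt k := by
  simp [qInt, sum_range_add, pow_add, mul_sum]

lemma qInt_eq_div (k : ℕ) : qInt k = (q ^ k - 1) / (q - 1) :=
  eq_div_of_mul_eq q_sub_one_ne_zero (geom_sum_mul q k)

lemma qFact_succ (k : ℕ) : qFact (k + 1) = qFact k * qInt (k + 1) := prod_range_succ _ _

lemma qInt_mul_one_add_q_pow (a b j : ℕ) :
    qInt (a + b + 2 * j) * (1 + q ^ (a + b + j)) =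
      qInt a * (1 + q ^ (a + j)) + q ^ (2 * a + j) * qInt b * (1 + q ^ (b + j)) +
        q ^ a * qInt j * (1 + q ^ (a + b + j)) * (1 + q ^ (b + j)) := by
  simp only [qInt_eq_div]
  field_simp [q_sub_one_ne_zero]
  ring

lemma choose_two_succ (k : ℕ) : (k + 1).choose 2 = k.choose 2 + k := by
  rw [Nat.choose_succ_succ, Nat.choose_one_right, add_comm]

/-- The q-Pochhammer symbol `(-q; q)_k`. -/
def negQPoch (k : ℕ) : F := ∏ i ∈ range k, (1 + q ^ (i + 1))

lemma negQPoch_ne_zero (k : ℕ) : negQPoch k ≠ 0 :=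
  prod_ne_zero_iff.2 fun i _ => one_add_q_pow_ne_zero (i + 1)

lemma negQPoch_succ (k : ℕ) : negQPoch (k + 1) = negQPoch k * (1 + q ^ (k + 1)) :=
  prod_range_succ _ _

lemma negQPoch_mul_prod_Icc {m k : ℕ} (hmk : m ≤ k) :
    negQPoch m * ∏ i ∈ Icc (m + 1) k, (1 + q ^ i) = negQPoch k := by
  induction k, hmk using Nat.le_induction with
  | base => simp
  | succ k hmk ih => rw [prod_Icc_succ_top (by omega), ← mul_assoc, ih, negQPoch_succ]

/-- The coefficient of `X^a D_q^b` in `F(a + b + 2j)`; in the theorem, `m = a + j`. -/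
def normalCoeff (a b j : ℕ) : F :=
  q ^ ((j + 1).choose 2 + (b + j).choose 2) * s ^ (b + j) * qFact (a + b + 2 * j) *
      negQPoch (a + b + j) /
    (qFact a * qFact b * qFact j * negQPoch (a + j) * negQPoch (b + j))

def normalCoeffQuot (a b j : ℕ) : F :=
  normalCoeff a b j / (qInt (a + b + 2 * j) * (1 + q ^ (a + b + j)))

/- The contributions to `normalCoeff a b j` of `X`, of `D_q` passing through `X^a`, and of
`D_q` contracting with an `X`. -/
def xPart (a b j : ℕ) : F := qInt a * (1 + q ^ (a + j)) * normalCoeffQuot a b j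

def dPart (a b j : ℕ) : F := q ^ (2 * a + j) * qInt b * (1 + q ^ (b + j)) * normalCoeffQuot a b j

def contrPart (a b j : ℕ) : F :=
  q ^ a * qInt j * (1 + q ^ (a + b + j)) * (1 + q ^ (b + j)) * normalCoeffQuot a b j

lemma normalCoeff_eq_add {a b j : ℕ} (hN : a + b + 2 * j ≠ 0) :
    normalCoeff a b j = xPart a b j + dPart a b j + contrPart a b j := by
  obtain ⟨N, hN⟩ := Nat.exists_eq_succ_of_ne_zero hN
  rw [xPart, dPart, contrPart, ← add_mul, ← add_mul, ← qInt_mul_one_add_q_pow,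
    normalCoeffQuot,
    mul_div_cancel₀ _ (mul_ne_zero (hN ▸ qInt_succ_ne_zero N) (one_add_q_pow_ne_zero _))]

lemma xPart_succ_left (a b j : ℕ) : xPart (a + 1) b j = normalCoeff a b j := by
  rw [xPart, normalCoeffQuot, normalCoeff, normalCoeff,
    show a + 1 + b + 2 * j = a + b + 2 * j + 1 by omega,
    show a + 1 + b + j = a + b + j + 1 by omega, show a + 1 + j = a + j + 1 by omega,
    qFact_succ, qFact_succ, negQPoch_succ, negQPoch_succ]
  field_simp [qFact_ne_zero, negQPoch_ne_zero, qInt_succ_ne_zero, one_add_q_pow_ne_zero]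

lemma dPart_succ_mid (a b j : ℕ) :
    dPart a (b + 1) j = q ^ (a + b + 2 * j) * s * q ^ a * normalCoeff a b j := by
  rw [dPart, normalCoeffQuot, normalCoeff, normalCoeff,
    show a + (b + 1) + 2 * j = a + b + 2 * j + 1 by omega,
    show a + (b + 1) + j = a + b + j + 1 by omega, show b + 1 + j = b + j + 1 by omega,
    choose_two_succ (b + j), pow_succ s, qFact_succ (a + b + 2 * j), qFact_succ b,
    negQPoch_succ (a + b + j), negQPoch_succ (b + j)]
  field_simp [qFact_ne_zero, negQPoch_ne_zero, qInt_succ_ne_zero, one_add_q_pow_ne_zero]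
  ring

lemma contrPart_succ_right (a b j : ℕ) :
    contrPart a b (j + 1) =
      q ^ (a + 1 + b + 2 * j) * s * qInt (a + 1) * normalCoeff (a + 1) b j := by
  rw [contrPart, normalCoeffQuot, normalCoeff, normalCoeff,
    show a + b + 2 * (j + 1) = a + b + 2 * j + 1 + 1 by omega,
    show a + 1 + b + 2 * j = a + b + 2 * j + 1 by omega,
    show a + b + (j + 1) = a + b + j + 1 by omega, show a + 1 + b + j = a + b + j + 1 by omega,
    show a + (j + 1) = a + j + 1 by omega, show a + 1 + j = a + j + 1 by omega,
    show b + (j + 1) = b + j + 1 by omega, choose_two_succ (j + 1), choose_two_succ (b + j),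
    pow_succ s, qFact_succ (a + b + 2 * j + 1), qFact_succ j, qFact_succ a, negQPoch_succ (b + j)]
  field_simp [qFact_ne_zero, negQPoch_ne_zero, qInt_succ_ne_zero, one_add_q_pow_ne_zero]
  ring

section Operators

open Polynomial

lemma Dq_apply (p : F[X]) : Dq p = (q - 1)⁻¹ • divX (aeval (C q * X) p - p) := rfl

lemma Dq_X_pow (k : ℕ) : Dq (X ^ k : F[X]) = qInt k • X ^ (k - 1) := by
  have hsub : aeval (C q * X) (X ^ k : F[X]) - X ^ k = C (q ^ k - 1) * X ^ k := by
    simp [mul_pow, sub_mul]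
  rw [Dq_apply, hsub, divX_C_mul, divX_X_pow]
  rcases k with _ | k
  · simp [qInt_zero]
  · simp [qInt_eq_div, smul_eq_C_mul, div_eq_inv_mul, ← mul_assoc]

lemma Xop_pow_apply (a : ℕ) (p : F[X]) : (Xop ^ a) p = X ^ a * p := by
  rw [Xop, LinearMap.pow_mulLeft, LinearMap.mulLeft_apply]

lemma Dq_mul_Xop_pow (a : ℕ) :
    Dq * Xop ^ a = q ^ a • (Xop ^ a * Dq) + qInt a • Xop ^ (a - 1) := by
  refine (basisMonomials F).ext fun k => ?_
  simp only [coe_basisMonomials, ← X_pow_eq_monomial, LinearMap.add_apply, LinearMap.smul_apply,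
    Module.End.mul_apply, Xop_pow_apply, ← pow_add, Dq_X_pow, mul_smul_comm]
  rcases k with _ | k
  · simp [qInt_zero]
  rcases a with _ | a
  · simp [qInt_zero]
  rw [qInt_add, add_smul, mul_smul, add_comm, show a + 1 + (k + 1) - 1 = a + 1 + k by omega,
    Nat.add_sub_cancel, Nat.add_sub_cancel, Nat.add_right_comm a 1 k]
  rfl

lemma Xop_add_smul_Dq_mul (u c : F) (a b : ℕ) :
    (Xop + u • Dq) * (c • (Xop ^ a * Dq ^ b)) =
      c • (Xop ^ (a + 1) * Dq ^ b) + (u * q ^ a * c) • (Xop ^ a * Dq ^ (b + 1)) +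
        (u * qInt a * c) • (Xop ^ (a - 1) * Dq ^ b) := by
  rw [add_mul, smul_mul_assoc, mul_smul_comm, ← mul_assoc, ← pow_succ', mul_smul_comm,
    ← mul_assoc, Dq_mul_Xop_pow, add_mul, smul_mul_assoc, smul_mul_assoc, mul_assoc,
    ← pow_succ']
  simp only [smul_add, smul_smul, add_assoc, mul_assoc, mul_comm c]

end Operators

def normalOrderIndex (n : ℕ) : Finset (ℕ × ℕ × ℕ) :=
  (range (n + 1) ×ˢ range (n + 1) ×ˢ range (n + 1)).filter fun t => t.1 + t.2.1 + 2 * t.2.2 = n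

@[simp]
lemma mem_normalOrderIndex {n : ℕ} {t : ℕ × ℕ × ℕ} :
    t ∈ normalOrderIndex n ↔ t.1 + t.2.1 + 2 * t.2.2 = n := by
  simp only [normalOrderIndex, mem_filter, mem_product, mem_range]
  exact ⟨fun ht => ht.2, fun ht => ⟨⟨by omega, by omega, by omega⟩, ht⟩⟩

section Reindexing

variable {M : Type*} [AddCommMonoid M] (n : ℕ)

lemma sum_normalOrderIndex_succ_of_left (g : ℕ × ℕ × ℕ → M)
    (hg : ∀ b j, g (0, b, j) = 0) :
    ∑ t ∈ normalOrderIndex (n + 1), g t =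
      ∑ t ∈ normalOrderIndex n, g (t.1 + 1, t.2.1, t.2.2) := by
  symm
  refine sum_of_injOn (fun t => (t.1 + 1, t.2.1, t.2.2)) ?_ ?_ ?_ fun _ _ => rfl
  · rintro ⟨a, b, j⟩ - ⟨a', b', j'⟩ - h
    simp_all
  · rintro ⟨a, b, j⟩ ht
    simp only [mem_coe, mem_normalOrderIndex] at ht ⊢
    omega
  · rintro ⟨_ | a, b, j⟩ ht hnot
    · exact hg b j
    · refine absurd ⟨(a, b, j), ?_, rfl⟩ hnot
      simp only [mem_coe, mem_normalOrderIndex] at ht ⊢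
      omega

lemma sum_normalOrderIndex_succ_of_mid (g : ℕ × ℕ × ℕ → M)
    (hg : ∀ a j, g (a, 0, j) = 0) :
    ∑ t ∈ normalOrderIndex (n + 1), g t =
      ∑ t ∈ normalOrderIndex n, g (t.1, t.2.1 + 1, t.2.2) := by
  symm
  refine sum_of_injOn (fun t => (t.1, t.2.1 + 1, t.2.2)) ?_ ?_ ?_ fun _ _ => rfl
  · rintro ⟨a, b, j⟩ - ⟨a', b', j'⟩ - h
    simp_all
  · rintro ⟨a, b, j⟩ ht
    simp only [mem_coe, mem_normalOrderIndex] at ht ⊢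
    omega
  · rintro ⟨a, _ | b, j⟩ ht hnot
    · exact hg a j
    · refine absurd ⟨(a, b, j), ?_, rfl⟩ hnot
      simp only [mem_coe, mem_normalOrderIndex] at ht ⊢
      omega

lemma sum_normalOrderIndex_succ_of_right (f g : ℕ × ℕ × ℕ → M)
    (hf : ∀ b j, f (0, b, j) = 0) (hg : ∀ a b, g (a, b, 0) = 0)
    (hfg : ∀ a b j, a + 1 + b + 2 * j = n → f (a + 1, b, j) = g (a, b, j + 1)) :
    ∑ t ∈ normalOrderIndex (n + 1), g t = ∑ t ∈ normalOrderIndex n, f t := by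
  symm
  rw [← sum_filter_of_ne (p := fun t => t.1 ≠ 0)]
  swap
  · rintro ⟨a, b, j⟩ - hf0 rfl
    exact hf0 (hf b j)
  refine sum_of_injOn (fun t => (t.1 - 1, t.2.1, t.2.2 + 1)) ?_ ?_ ?_ ?_
  · rintro ⟨a, b, j⟩ ht ⟨a', b', j'⟩ ht' h
    simp only [coe_filter, mem_normalOrderIndex, Set.mem_ofPred_eq, Prod.mk.injEq] at ht ht' h ⊢
    omega
  · rintro ⟨a, b, j⟩ ht
    simp only [coe_filter, mem_coe, mem_normalOrderIndex, Set.mem_ofPred_eq] at ht ⊢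
    omega
  · rintro ⟨a, b, _ | j⟩ ht hnot
    · exact hg a b
    · refine absurd ⟨(a + 1, b, j), ?_, by simp⟩ hnot
      simp only [coe_filter, mem_normalOrderIndex, Set.mem_ofPred_eq] at ht ⊢
      omega
  · rintro ⟨_ | a, b, j⟩ ht
    · simp at ht
    · exact hfg a b j (by simpa using ht)

end Reindexing

def normalSum (n : ℕ) : Module.End F (Polynomial F) :=
  ∑ t ∈ normalOrderIndex n, normalCoeff t.1 t.2.1 t.2.2 • (Xop ^ t.1 * Dq ^ t.2.1)

lemma normalSum_zero : normalSum 0 = 1 := by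
  rw [normalSum, show normalOrderIndex 0 = {(0, 0, 0)} by decide, sum_singleton]
  simp [normalCoeff, negQPoch, qFact]

lemma normalSum_succ (n : ℕ) : normalSum (n + 1) = (Xop + (q ^ n * s) • Dq) * normalSum n := by
  have hX : ∑ t ∈ normalOrderIndex (n + 1), xPart t.1 t.2.1 t.2.2 • (Xop ^ t.1 * Dq ^ t.2.1) =
      ∑ t ∈ normalOrderIndex n,
        normalCoeff t.1 t.2.1 t.2.2 • (Xop ^ (t.1 + 1) * Dq ^ t.2.1) := by
    rw [sum_normalOrderIndex_succ_of_left _ _ fun b j => by simp [xPart, qInt_zero]]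
    simp only [xPart_succ_left]
  have hD : ∑ t ∈ normalOrderIndex (n + 1), dPart t.1 t.2.1 t.2.2 • (Xop ^ t.1 * Dq ^ t.2.1) =
      ∑ t ∈ normalOrderIndex n,
        (q ^ n * s * q ^ t.1 * normalCoeff t.1 t.2.1 t.2.2) • (Xop ^ t.1 * Dq ^ (t.2.1 + 1)) := by
    rw [sum_normalOrderIndex_succ_of_mid _ _ fun a j => by simp [dPart, qInt_zero]]
    exact sum_congr rfl fun t ht => by rw [dPart_succ_mid, mem_normalOrderIndex.1 ht]
  have hC : ∑ t ∈ normalOrderIndex (n + 1),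
        contrPart t.1 t.2.1 t.2.2 • (Xop ^ t.1 * Dq ^ t.2.1) =
      ∑ t ∈ normalOrderIndex n,
        (q ^ n * s * qInt t.1 * normalCoeff t.1 t.2.1 t.2.2) • (Xop ^ (t.1 - 1) * Dq ^ t.2.1) :=
    sum_normalOrderIndex_succ_of_right _ _ _ (fun b j => by simp [qInt_zero])
      (fun a b => by simp [contrPart, qInt_zero]) fun a b j hn => by
        rw [← hn, contrPart_succ_right, Nat.add_sub_cancel]
  calc normalSum (n + 1)
      = ∑ t ∈ normalOrderIndex (n + 1), (xPart t.1 t.2.1 t.2.2 • (Xop ^ t.1 * Dq ^ t.2.1) +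
          dPart t.1 t.2.1 t.2.2 • (Xop ^ t.1 * Dq ^ t.2.1) +
            contrPart t.1 t.2.1 t.2.2 • (Xop ^ t.1 * Dq ^ t.2.1)) :=
        sum_congr rfl fun t ht => by
          rw [mem_normalOrderIndex] at ht
          rw [← add_smul, ← add_smul, ← normalCoeff_eq_add (by omega)]
    _ = (Xop + (q ^ n * s) • Dq) * normalSum n := by
        simp only [sum_add_distrib, hX, hD, hC, normalSum, mul_sum, Xop_add_smul_Dq_mul]

lemma Fop_eq_normalSum (n : ℕ) : Fop n = normalSum n := by
  induction n with
  | zero => exact normalSum_zero.symm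
  | succ n ih => rw [Fop, ih, normalSum_succ]

lemma normalCoeff_eq_prod_Icc (a b j : ℕ) :
    normalCoeff a b j =
      q ^ ((j + 1).choose 2 + (b + j).choose 2) *
            (∏ i ∈ Icc (a + j + 1) (a + b + j), (1 + q ^ i)) * qFact (a + b + 2 * j) *
          s ^ (b + j) /
        (negQPoch (b + j) * qFact j * qFact a * qFact b) := by
  rw [normalCoeff, ← negQPoch_mul_prod_Icc (show a + j ≤ a + b + j by omega)]
  field_simp [qFact_ne_zero, negQPoch_ne_zero]

theorem Fop_normal_ordering (n : ℕ) :
    Fop n =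
      ∑ m ∈ Finset.range (n + 1), ∑ j ∈ Finset.range (min m (n - m) + 1),
        (q ^ ((j + 1).choose 2 + (n - m).choose 2) *
            (∏ i ∈ Finset.Icc (m + 1) (n - j), (1 + q ^ i)) * qFact n * s ^ (n - m) /
          ((∏ i ∈ Finset.range (n - m), (1 + q ^ (i + 1))) * qFact j * qFact (m - j) *
            qFact (n - m - j))) •
          (Xop ^ (m - j) * Dq ^ (n - m - j)) := by
  rw [Fop_eq_normalSum, normalSum, sum_sigma']
  refine sum_nbij' (fun t => ⟨t.1 + t.2.2, t.2.2⟩) (fun p => (p.1 - p.2, n - p.1 - p.2, p.2))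
    ?_ ?_ ?_ ?_ ?_
  · rintro ⟨a, b, j⟩ ht
    simp only [mem_normalOrderIndex, mem_sigma, mem_range, Nat.lt_add_one_iff, le_min_iff] at ht ⊢
    omega
  · rintro ⟨m, j⟩ hp
    simp only [mem_sigma, mem_range, Nat.lt_add_one_iff, le_min_iff, mem_normalOrderIndex] at hp ⊢
    omega
  · rintro ⟨a, b, j⟩ ht
    simp only [mem_normalOrderIndex, add_tsub_cancel_right, Prod.mk.injEq, true_and,
      and_true] at ht ⊢
    omega
  · rintro ⟨m, j⟩ hp
    simp only [mem_sigma, mem_range, Nat.lt_add_one_iff, le_min_iff, Sigma.mk.injEq, heq_eq_eq,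
      and_true] at hp ⊢
    omega
  · rintro ⟨a, b, j⟩ ht
    obtain rfl := mem_normalOrderIndex.1 ht
    rw [show a + b + 2 * j - (a + j) = b + j by omega, show a + b + 2 * j - j = a + b + j by omega,
      Nat.add_sub_cancel, Nat.add_sub_cancel, normalCoeff_eq_prod_Icc]
    rfl

end
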